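/- Let S be an involution semigroup and T ⊆ S such that (1) x H_S² x* ⊆ T for each x ∈ S, (2) Tω ∩ S² = T ∩ S², and (3) T \ S² = T* \ S². Then T is an involution subsemigroup of S containing H_S. -/

import Mathlib

/-!
Condition (2) says that an element `s ∈ S²` lies in `T` as soon as `s * t ∈ T` for some `t ∈ T`,
so every closure property of `T` comes down to choosing such a right multiplier `t`. For
`x * h * star x` with `h` a hermitian square, `t = x * (p * p) * star x` with `p = star x * x` lies
in `T` by (1), and so does the product, since `p * p * p` is again a hermitian square. The other
multipliers are `x * p * star x` for `x * star x`, `star b` for `a * b`, and for `star t` with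
`t ∈ S²` first `t` (giving `star t * t * star t`) and then `t * star t`. Condition (3) gives
`star t ∈ T` for `t ∉ S²`.
-/

open Pointwise

/-- The set of hermitian squares of an involution semigroup. -/
def hermSq (S : Type*) [Mul S] [Star S] : Set S := {a | ∃ x : S, a = x * star x}

/-- `T` is an involution subsemigroup. -/
def IsInvSub {S : Type*} [Mul S] [Star S] (T : Set S) : Prop :=
  (∀ x ∈ T, ∀ y ∈ T, x * y ∈ T) ∧ ∀ x ∈ T, star x ∈ T

/-- `T` is an HS-stable involution subsemigroup. -/
def IsHSStable {S : Type*} [Mul S] [Star S] (T : Set S) : Prop :=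
  IsInvSub T ∧ hermSq S ⊆ T ∧
    ∀ h ∈ hermSq S, ∀ x y : S, x * h * y ∈ T → x * y ∈ T

/-- The HS-stable involution subsemigroup generated by `B`. -/
def genHS {S : Type*} [Mul S] [Star S] (B : Set S) : Set S :=
  ⋂₀ {T | IsHSStable T ∧ B ⊆ T}

/-- The involution subsemigroup generated by `B`. -/
def genInv {S : Type*} [Mul S] [Star S] (B : Set S) : Set S :=
  ⋂₀ {T | IsInvSub T ∧ B ⊆ T}

/-- The closure `Tω`. -/
def omegaCl {S : Type*} [Mul S] (T : Set S) : Set S := {s | ∃ t ∈ T, s * t ∈ T}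

/-- `S² = {x y : x, y ∈ S}`. -/
def sqSet (S : Type*) [Mul S] : Set S := {a | ∃ x y : S, a = x * y}

/-- Iterated complex product `A 0 * A 1 * ⋯ * A n`. -/
def pprod {S : Type*} [Mul S] (A : ℕ → Set S) : ℕ → Set S
  | 0 => A 0
  | (k+1) => pprod A k * A (k+1)

section InvolutionSemigroup

variable {S : Type*}

theorem mul_star_mem_hermSq [Mul S] [Star S] (x : S) : x * star x ∈ hermSq S := ⟨x, rfl⟩

theorem star_mul_self_mem_hermSq [Mul S] [InvolutiveStar S] (x : S) : star x * x ∈ hermSq S :=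
  ⟨star x, by rw [star_star]⟩

theorem mul_mem_sqSet [Mul S] (x y : S) : x * y ∈ sqSet S := ⟨x, y, rfl⟩

theorem mem_of_mul_mem_of_omegaCl_inter [Mul S] {T : Set S}
    (hT : omegaCl T ∩ sqSet S = T ∩ sqSet S)
    {s t : S} (hs : s ∈ sqSet S) (ht : t ∈ T) (hst : s * t ∈ T) : s ∈ T :=
  (hT.subset ⟨⟨t, ht, hst⟩, hs⟩).1

theorem star_mem_of_not_mem_sqSet [Mul S] [InvolutiveStar S] {T : Set S}
    (hT : T \ sqSet S = ((star ·) '' T) \ sqSet S)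
    {t : S} (ht : t ∈ T) (hts : t ∉ sqSet S) : star t ∈ T := by
  obtain ⟨⟨u, hu, rfl⟩, -⟩ := hT.subset ⟨ht, hts⟩
  rwa [star_star]

variable [Semigroup S] [StarMul S]

theorem conj_mem_hermSq {h : S} (hh : h ∈ hermSq S) (x : S) : x * h * star x ∈ hermSq S := by
  obtain ⟨y, rfl⟩ := hh
  exact ⟨x * y, by rw [star_mul, ← mul_assoc, ← mul_assoc]⟩

theorem star_mem_sqSet {s : S} (hs : s ∈ sqSet S) : star s ∈ sqSet S := by
  obtain ⟨x, y, rfl⟩ := hs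
  exact ⟨star y, star x, star_mul x y⟩

variable {T : Set S}

theorem conj_mem_of_mem_hermSq
    (hconj : ∀ x : S, ∀ h ∈ hermSq S, ∀ h' ∈ hermSq S, x * (h * h') * star x ∈ T)
    (hω : ∀ ⦃s t : S⦄, s ∈ sqSet S → t ∈ T → s * t ∈ T → s ∈ T)
    (x : S) {h : S} (hh : h ∈ hermSq S) : x * h * star x ∈ T := by
  have hp := star_mul_self_mem_hermSq x
  have hp3 : star x * x * (star x * x) * (star x * x) ∈ hermSq S := by
    simpa only [star_mul, star_star] using conj_mem_hermSq hp (star x * x)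
  refine hω (mul_mem_sqSet (x * h) (star x)) (hconj x _ hp _ hp) ?_
  convert hconj x h hh _ hp3 using 1
  simp only [mul_assoc]

theorem hermSq_subset
    (hconj : ∀ x : S, ∀ h ∈ hermSq S, ∀ h' ∈ hermSq S, x * (h * h') * star x ∈ T)
    (hω : ∀ ⦃s t : S⦄, s ∈ sqSet S → t ∈ T → s * t ∈ T → s ∈ T) :
    hermSq S ⊆ T := by
  rintro _ ⟨x, rfl⟩
  have hp := star_mul_self_mem_hermSq x
  refine hω (mul_mem_sqSet x (star x)) (conj_mem_of_mem_hermSq hconj hω x hp) ?_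
  convert hconj x _ hp _ hp using 1
  simp only [mul_assoc]

theorem star_mem_of_mem_sqSet (hH : hermSq S ⊆ T)
    (hω : ∀ ⦃s t : S⦄, s ∈ sqSet S → t ∈ T → s * t ∈ T → s ∈ T)
    {t : S} (ht : t ∈ T) (hts : t ∈ sqSet S) : star t ∈ T := by
  have hsym : star t * t * star t ∈ T := by
    refine hω (mul_mem_sqSet _ _) ht ?_
    have := hH (mul_star_mem_hermSq (star t * t))
    rwa [star_mul, star_star, ← mul_assoc] at this
  refine hω (star_mem_sqSet hts) (hH (mul_star_mem_hermSq t)) ?_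
  rwa [← mul_assoc]

theorem mul_mem_of_mem
    (hω : ∀ ⦃s t : S⦄, s ∈ sqSet S → t ∈ T → s * t ∈ T → s ∈ T)
    (hstar : ∀ t ∈ T, star t ∈ T)
    (hconj : ∀ x : S, ∀ h ∈ hermSq S, x * h * star x ∈ T)
    {a b : S} (ha : a ∈ T) (hb : b ∈ T) : a * b ∈ T := by
  have hmul_hermSq : ∀ h ∈ hermSq S, a * h ∈ T := fun h hh =>
    hω (mul_mem_sqSet a h) (hstar a ha) (hconj a h hh)
  refine hω (mul_mem_sqSet a b) (hstar b hb) ?_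
  rw [mul_assoc]
  exact hmul_hermSq _ (mul_star_mem_hermSq b)

end InvolutionSemigroup

theorem stmt10 {S : Type*} [Semigroup S] [StarMul S] (T : Set S)
    (h1 : ∀ x : S, ∀ h ∈ hermSq S, ∀ h' ∈ hermSq S, x * (h * h') * star x ∈ T)
    (h2 : omegaCl T ∩ sqSet S = T ∩ sqSet S)
    (h3 : T \ sqSet S = ((star ·) '' T) \ sqSet S) :
    IsInvSub T ∧ hermSq S ⊆ T := by
  have hω : ∀ ⦃s t : S⦄, s ∈ sqSet S → t ∈ T → s * t ∈ T → s ∈ T := fun _ _ =>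
    mem_of_mul_mem_of_omegaCl_inter h2
  have hH : hermSq S ⊆ T := hermSq_subset h1 hω
  have hstar : ∀ t ∈ T, star t ∈ T := fun t ht => by
    by_cases hts : t ∈ sqSet S
    · exact star_mem_of_mem_sqSet hH hω ht hts
    · exact star_mem_of_not_mem_sqSet h3 ht hts
  have hconj : ∀ x : S, ∀ h ∈ hermSq S, x * h * star x ∈ T := fun x _ hh =>
    conj_mem_of_mem_hermSq h1 hω x hh
  exact ⟨⟨fun a ha b hb => mul_mem_of_mem hω hstar hconj ha hb, hstar⟩, hH⟩
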